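/- Let p be an odd prime and let L₁,...,L_m be linear forms in d variables over 𝔽_p whose squares LᵢᵀLᵢ are linearly DEPENDENT over 𝔽_p, with the maximal square-independent subsystem having size ℓ < m. Let A = {x ∈ 𝔽_p^n : xᵀx = 0}. Then the probability, over random x ∈ (𝔽_p^n)^d, that Lᵢ(x) ∈ A for every i is at least p^{-ℓ} − p^{-n/2}; in particular, for n large this exceeds α^m + ε for some ε > 0 depending only on p, ℓ, m, where α is the density of A. -/

import Mathlib

/-!
Write `gramPairing x B = ∑ⱼ xⱼᵀ B xⱼ` for the columns `xⱼ ∈ 𝔽_p^d` of `x`, so that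
`Lᵢ(x) ∈ A` says `gramPairing x (cᵢ cᵢᵀ) = 0`. Since `gramPairing x` is linear in `B`, the
conditions for `i ∉ S` follow from those for `i ∈ S`. Detecting the `ℓ` conditions by additive
characters gives `p^ℓ · #{x} = ∑_ξ T(B_ξ)^n`, where `B_ξ = ∑ ξ_k c_k c_kᵀ` and
`T(B) = ∑_v ψ(vᵀ B v)`. The term `ξ = 0` is `p^{dn}`; for `ξ ≠ 0` the symmetric matrix `B_ξ` is
nonzero by linear independence, and since `p` is odd, `|T(B)|² = p^d · #ker B ≤ p^{2d-1}`.
So the density is within `p^{-n/2}` of `p^{-ℓ}`. The same estimate for the single form `∑ yⱼ²`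
gives `α(n) ≤ 1/p + p^{-n/2}`, and `p^{-m} < p^{-ℓ}` leaves a gap for large `n`.
-/

open Finset Matrix

lemma AddChar.map_sum_eq_prod {A M κ : Type*} [AddCommMonoid A] [CommMonoid M]
    (ψ : AddChar A M) (s : Finset κ) (f : κ → A) : ψ (∑ i ∈ s, f i) = ∏ i ∈ s, ψ (f i) := by
  induction s using Finset.cons_induction with
  | empty => simp
  | cons a s ha ih => rw [sum_cons, prod_cons, ψ.map_add_eq_mul, ih]

namespace Matrix.IsSymm

variable {ι R : Type*} [Fintype ι] [CommSemiring R] {B : Matrix ι ι R}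

lemma dotProduct_mulVec_comm (hB : B.IsSymm) (v w : ι → R) : v ⬝ᵥ B *ᵥ w = w ⬝ᵥ B *ᵥ v := by
  rw [dotProduct_mulVec, ← vecMul_transpose, hB.eq, dotProduct_comm]

lemma add_dotProduct_mulVec_add (hB : B.IsSymm) (v w : ι → R) :
    (v + w) ⬝ᵥ B *ᵥ (v + w) = v ⬝ᵥ B *ᵥ v + w ⬝ᵥ B *ᵥ w + v ⬝ᵥ ((2 : R) • B *ᵥ w) := by
  rw [mulVec_add, add_dotProduct, dotProduct_add, dotProduct_add, hB.dotProduct_mulVec_comm w v,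
    dotProduct_smul, two_smul]
  abel

end Matrix.IsSymm

section GramPairing

variable {F : Type*} [Field F] {ι : Type*} [Fintype ι] {n : ℕ}

/-- `B ↦ tr (xᵀ B x)`, the pairing of `B` with the Gram matrix of the rows of `x`. -/
def gramPairing (x : ι → Fin n → F) : Matrix ι ι F →ₗ[F] F where
  toFun B := ∑ j, (fun u => x u j) ⬝ᵥ B *ᵥ fun u => x u j
  map_add' B C := by simp only [add_mulVec, dotProduct_add, sum_add_distrib]
  map_smul' c B := by
    simp only [smul_mulVec, dotProduct_smul, smul_eq_mul, mul_sum, RingHom.id_apply]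

lemma gramPairing_vecMulVec (x : ι → Fin n → F) (c : ι → F) :
    gramPairing x (vecMulVec c c) = ∑ j, (∑ u, c u * x u j) ^ 2 := by
  simp only [gramPairing, LinearMap.coe_mk, AddHom.coe_mk, vecMulVec_mulVec, op_smul_eq_smul,
    dotProduct_smul, smul_eq_mul, dotProduct_comm _ c, sq]
  rfl

lemma gramPairing_one (x : Unit → Fin n → F) : gramPairing x 1 = ∑ j, x () j ^ 2 := by
  simp [gramPairing, sq]

end GramPairing

section GaussSum

variable {F : Type*} [Field F] [Fintype F] (ψ : AddChar F ℂ)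
  {ι : Type*} [Fintype ι] [DecidableEq ι]

local notation "q" => Fintype.card F

lemma sum_addChar_dotProduct [DecidableEq F] (hψ : ψ.IsPrimitive) (a : ι → F) :
    ∑ w : ι → F, ψ (w ⬝ᵥ a) = if a = 0 then (q : ℂ) ^ Fintype.card ι else 0 := by
  simp only [dotProduct, AddChar.map_sum_eq_prod]
  rw [← Fintype.prod_sum (fun i (t : F) => ψ (t * a i))]
  simp only [AddChar.sum_mulShift _ hψ, Nat.cast_ite, Nat.cast_zero, prod_ite_zero, prod_const,
    card_univ, funext_iff, Pi.zero_apply, mem_univ, forall_const]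

def quadGaussSum (B : Matrix ι ι F) : ℂ := ∑ v : ι → F, ψ (v ⬝ᵥ B *ᵥ v)

lemma quadGaussSum_zero : quadGaussSum ψ (0 : Matrix ι ι F) = (q : ℂ) ^ Fintype.card ι := by
  simp [quadGaussSum]

lemma quadGaussSum_mul_conj [DecidableEq F] (hψ : ψ.IsPrimitive) (hF : ringChar F ≠ 2)
    {B : Matrix ι ι F} (hB : B.IsSymm) :
    quadGaussSum ψ B * starRingEnd ℂ (quadGaussSum ψ B) =
      (q : ℂ) ^ Fintype.card ι * #{h : ι → F | B *ᵥ h = 0} := by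
  -- after `v = w + h` the cross term is linear in `w`, so summing over `w` kills `h ∉ ker B`
  have shift (w : ι → F) : ∑ v, ψ (v ⬝ᵥ B *ᵥ v + -(w ⬝ᵥ B *ᵥ w)) =
      ∑ h, ψ (h ⬝ᵥ B *ᵥ h) * ψ (w ⬝ᵥ ((2 : F) • B *ᵥ h)) := by
    rw [← Equiv.sum_comp (Equiv.addLeft w)]
    refine sum_congr rfl fun h _ => ?_
    rw [Equiv.coe_addLeft, hB.add_dotProduct_mulVec_add, ← AddChar.map_add_eq_mul]
    congr 1
    abel
  rw [quadGaussSum, map_sum, sum_mul_sum, sum_comm]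
  simp_rw [← AddChar.map_neg_eq_conj, ← AddChar.map_add_eq_mul, shift]
  rw [sum_comm]
  simp_rw [← mul_sum, sum_addChar_dotProduct ψ hψ, smul_eq_zero, Ring.two_ne_zero hF, false_or,
    mul_ite, mul_zero, ← sum_filter]
  rw [sum_congr rfl fun h hh => by
      rw [(mem_filter.mp hh).2, dotProduct_zero, AddChar.map_zero_eq_one, one_mul],
    sum_const, nsmul_eq_mul, mul_comm]

lemma card_mulVec_eq_zero_mul_le [DecidableEq F] {B : Matrix ι ι F} (hB : B ≠ 0) :
    #{h : ι → F | B *ᵥ h = 0} * q ≤ q ^ Fintype.card ι := by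
  set K := LinearMap.ker B.mulVecLin
  have hK : K ≠ ⊤ := fun h => hB <| Matrix.toLin'.map_eq_zero_iff.mp <| by
    rw [Matrix.toLin'_apply', ← LinearMap.ker_eq_top]
    exact h
  have hcard : #{h : ι → F | B *ᵥ h = 0} = q ^ Module.finrank F K := by
    have hnat : Nat.card K = Nat.card {h : ι → F // B *ᵥ h = 0} :=
      Nat.card_congr (Equiv.subtypeEquivRight fun h => LinearMap.mem_ker)
    rw [Module.natCard_eq_pow_finrank (K := F), Nat.card_eq_fintype_card, Nat.card_eq_fintype_card,
      Fintype.card_subtype] at hnat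
    exact hnat.symm
  have hrank : Module.finrank F K < Fintype.card ι := by
    simpa using Submodule.finrank_lt hK
  rw [hcard, ← pow_succ]
  exact Nat.pow_le_pow_right Fintype.card_pos hrank

lemma norm_quadGaussSum_mul_sqrt_le [DecidableEq F] (hψ : ψ.IsPrimitive) (hF : ringChar F ≠ 2)
    {B : Matrix ι ι F} (hB : B.IsSymm) (hB0 : B ≠ 0) :
    ‖quadGaussSum ψ B‖ * √q ≤ (q : ℝ) ^ Fintype.card ι := by
  have hsq : ‖quadGaussSum ψ B‖ ^ 2 = (q : ℝ) ^ Fintype.card ι * #{h : ι → F | B *ᵥ h = 0} := by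
    have := quadGaussSum_mul_conj ψ hψ hF hB
    rw [Complex.mul_conj, Complex.normSq_eq_norm_sq] at this
    exact_mod_cast this
  have hker : (#{h : ι → F | B *ᵥ h = 0} : ℝ) * q ≤ (q : ℝ) ^ Fintype.card ι := by
    exact_mod_cast card_mulVec_eq_zero_mul_le hB0
  refine (pow_le_pow_iff_left₀ (by positivity) (by positivity) two_ne_zero).mp ?_
  rw [mul_pow, hsq, Real.sq_sqrt (Nat.cast_nonneg _), mul_assoc, sq]
  gcongr

lemma sum_addChar_gramPairing {n : ℕ} (B : Matrix ι ι F) :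
    ∑ x : ι → Fin n → F, ψ (gramPairing x B) = quadGaussSum ψ B ^ n := by
  have hpow : quadGaussSum ψ B ^ n = ∏ _j : Fin n, quadGaussSum ψ B := by simp
  rw [hpow, quadGaussSum, Fintype.prod_sum]
  simp only [gramPairing, LinearMap.coe_mk, AddHom.coe_mk, AddChar.map_sum_eq_prod]
  exact Fintype.sum_equiv (Equiv.piComm fun (_ : ι) (_ : Fin n) => F) _ _ fun x => rfl

end GaussSum

lemma abs_div_sub_inv_le_of_abs_mul_sub_le {N a D e : ℝ} (ha : 1 ≤ a) (hD : 0 < D) (he : 0 ≤ e)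
    (h : |N * a - D| ≤ (a - 1) * (D * e)) : |N / D - a⁻¹| ≤ e := by
  have ha0 : 0 < a := zero_lt_one.trans_le ha
  rw [show N / D - a⁻¹ = (N * a - D) / (a * D) by field_simp, abs_div,
    abs_of_pos (mul_pos ha0 hD), div_le_iff₀ (mul_pos ha0 hD)]
  nlinarith [mul_nonneg hD.le he]

section Counting

variable {F : Type*} [Field F] [Fintype F] [DecidableEq F] (ψ : AddChar F ℂ)
  {ι : Type*} [Fintype ι] [DecidableEq ι] {κ : Type*} [Fintype κ] [DecidableEq κ]

local notation "q" => Fintype.card F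

def commonZeros (G : κ → Matrix ι ι F) (n : ℕ) : Finset (ι → Fin n → F) :=
  {x | ∀ k, gramPairing x (G k) = 0}

lemma card_commonZeros_mul_eq_sum (hψ : ψ.IsPrimitive) (G : κ → Matrix ι ι F) (n : ℕ) :
    (q : ℂ) ^ Fintype.card κ * #(commonZeros G n) =
      ∑ ξ : κ → F, quadGaussSum ψ (∑ k, ξ k • G k) ^ n := by
  have indicator (x : ι → Fin n → F) :
      (q : ℂ) ^ Fintype.card κ * (if ∀ k, gramPairing x (G k) = 0 then 1 else 0) =
        ∑ ξ : κ → F, ψ (gramPairing x (∑ k, ξ k • G k)) := by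
    have h := sum_addChar_dotProduct ψ hψ fun k => gramPairing x (G k)
    simp only [dotProduct, funext_iff, Pi.zero_apply] at h
    simp only [map_sum, map_smul, smul_eq_mul, h]
    split_ifs <;> simp
  rw [commonZeros, natCast_card_filter, mul_sum, sum_congr rfl fun x _ => indicator x, sum_comm]
  simp_rw [sum_addChar_gramPairing]

lemma abs_card_commonZeros_mul_sub_le (hψ : ψ.IsPrimitive) (hF : ringChar F ≠ 2)
    {G : κ → Matrix ι ι F} (hsymm : ∀ k, (G k).IsSymm) (hG : LinearIndependent F G) (n : ℕ) :
    |(#(commonZeros G n) : ℝ) * q ^ Fintype.card κ - q ^ (Fintype.card ι * n)| ≤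
      (q ^ Fintype.card κ - 1) * (q ^ (Fintype.card ι * n) * (√q ^ n)⁻¹) := by
  have hsplit : (((#(commonZeros G n) : ℝ) * q ^ Fintype.card κ - q ^ (Fintype.card ι * n) : ℝ) :
      ℂ) = ∑ ξ ∈ univ.erase (0 : κ → F), quadGaussSum ψ (∑ k, ξ k • G k) ^ n := by
    push_cast
    rw [mul_comm, card_commonZeros_mul_eq_sum ψ hψ G, ← add_sum_erase _ _ (mem_univ 0)]
    simp [quadGaussSum_zero, pow_mul]
  have hterm (ξ : κ → F) (hξ : ξ ∈ univ.erase 0) :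
      ‖quadGaussSum ψ (∑ k, ξ k • G k) ^ n‖ ≤ q ^ (Fintype.card ι * n) * (√q ^ n)⁻¹ := by
    have hB0 : ∑ k, ξ k • G k ≠ 0 := fun h =>
      ne_of_mem_erase hξ (funext (Fintype.linearIndependent_iff.mp hG ξ h))
    have hB : (∑ k, ξ k • G k).IsSymm :=
      IsSymm.ext fun i j => by simp [Matrix.sum_apply, (hsymm _).apply]
    have := norm_quadGaussSum_mul_sqrt_le ψ hψ hF hB hB0
    rw [norm_pow, pow_mul, ← inv_pow, ← mul_pow]
    gcongr
    rwa [← div_eq_mul_inv, le_div_iff₀ (by positivity)]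
  calc _ = ‖∑ ξ ∈ univ.erase (0 : κ → F), quadGaussSum ψ (∑ k, ξ k • G k) ^ n‖ := by
        rw [← hsplit, Complex.norm_real, Real.norm_eq_abs]
    _ ≤ ∑ ξ ∈ univ.erase (0 : κ → F), ‖quadGaussSum ψ (∑ k, ξ k • G k) ^ n‖ := norm_sum_le _ _
    _ ≤ ∑ _ξ ∈ univ.erase (0 : κ → F), (q : ℝ) ^ (Fintype.card ι * n) * (√q ^ n)⁻¹ :=
        sum_le_sum hterm
    _ = _ := by
        rw [sum_const, card_erase_of_mem (mem_univ _), card_univ, Fintype.card_fun, nsmul_eq_mul,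
          Nat.cast_sub (Nat.one_le_pow _ _ Fintype.card_pos)]
        push_cast
        ring

theorem abs_card_commonZeros_div_sub_le (hψ : ψ.IsPrimitive) (hF : ringChar F ≠ 2)
    {G : κ → Matrix ι ι F} (hsymm : ∀ k, (G k).IsSymm) (hG : LinearIndependent F G) (n : ℕ) :
    |(#(commonZeros G n) : ℝ) / Fintype.card (ι → Fin n → F) - ((q : ℝ) ^ Fintype.card κ)⁻¹| ≤
      (√q ^ n)⁻¹ := by
  rw [Fintype.card_fun, Fintype.card_fun, Fintype.card_fin, ← pow_mul, mul_comm n]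
  push_cast
  exact abs_div_sub_inv_le_of_abs_mul_sub_le (one_le_pow₀ (by exact_mod_cast Fintype.card_pos))
    (by positivity) (by positivity) (abs_card_commonZeros_mul_sub_le ψ hψ hF hsymm hG n)

theorem abs_card_sum_sq_eq_zero_div_sub_le (hψ : ψ.IsPrimitive) (hF : ringChar F ≠ 2) (n : ℕ) :
    |(#{y : Fin n → F | ∑ j, y j ^ 2 = 0} : ℝ) / q ^ n - (q : ℝ)⁻¹| ≤ (√q ^ n)⁻¹ := by
  have hG : LinearIndependent F fun _ : Unit => (1 : Matrix Unit Unit F) :=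
    linearIndependent_unique_iff.mpr one_ne_zero
  have hcard : #(commonZeros (fun _ : Unit => (1 : Matrix Unit Unit F)) n) =
      #{y : Fin n → F | ∑ j, y j ^ 2 = 0} :=
    card_equiv (Equiv.funUnique Unit _) fun x => by simp [commonZeros, gramPairing_one]
  simpa [hcard] using abs_card_commonZeros_div_sub_le ψ hψ hF (fun _ => isSymm_one) hG n

theorem abs_card_forall_sum_sq_eq_zero_div_sub_le (hψ : ψ.IsPrimitive) (hF : ringChar F ≠ 2)
    (c : κ → ι → F) (S : Finset κ) (hind : LinearIndependent F fun k : S => vecMulVec (c k) (c k))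
    (hspan : ∀ i, vecMulVec (c i) (c i) ∈
      Submodule.span F (Set.range fun k : S => vecMulVec (c k) (c k))) (n : ℕ) :
    |(#{x : ι → Fin n → F | ∀ i, ∑ j, (∑ u, c i u * x u j) ^ 2 = 0} : ℝ) /
        Fintype.card (ι → Fin n → F) - ((q : ℝ) ^ #S)⁻¹| ≤ (√q ^ n)⁻¹ := by
  have hzeros : ({x : ι → Fin n → F | ∀ i, ∑ j, (∑ u, c i u * x u j) ^ 2 = 0} : Finset _) =
      commonZeros (fun k : S => vecMulVec (c k) (c k)) n := by
    refine filter_congr fun x _ => ?_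
    simp only [gramPairing_vecMulVec]
    refine ⟨fun h k => h k, fun h i => ?_⟩
    have hker : Submodule.span F (Set.range fun k : S => vecMulVec (c k) (c k)) ≤
        LinearMap.ker (gramPairing x) :=
      Submodule.span_le.mpr (Set.range_subset_iff.mpr fun k =>
        (gramPairing_vecMulVec x (c k)).trans (h k))
    exact (gramPairing_vecMulVec x (c i)).symm.trans (hker (hspan i))
  rw [hzeros, ← Fintype.card_coe S]
  exact abs_card_commonZeros_div_sub_le ψ hψ hF (fun k => transpose_vecMulVec _ _) hind n

end Counting

open Filter Topology in
lemma exists_pos_forall_ge_pow_add_le {P α e : ℕ → ℝ} {L a : ℝ} {m : ℕ}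
    (he : Tendsto e atTop (𝓝 0)) (hlt : a ^ m < L) (hP : ∀ n, L - e n ≤ P n)
    (hα₀ : ∀ n, 0 ≤ α n) (hα : ∀ n, α n ≤ a + e n) :
    ∃ ε > 0, ∃ N, ∀ n ≥ N, α n ^ m + ε ≤ P n := by
  have hlim : Tendsto (fun n => (a + e n) ^ m + e n) atTop (𝓝 (a ^ m)) := by
    simpa using ((tendsto_const_nhds.add he).pow m).add he
  obtain ⟨N, hN⟩ := eventually_atTop.mp
    (hlim.eventually_lt_const (show a ^ m < (a ^ m + L) / 2 by linarith))
  refine ⟨(L - a ^ m) / 2, by linarith, N, fun n hn => ?_⟩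
  linarith [hN n hn, hP n, pow_le_pow_left₀ (hα₀ n) (hα n) m]

lemma Real.rpow_neg_natCast_div_two {x : ℝ} (hx : 0 ≤ x) (n : ℕ) :
    x ^ (-(n : ℝ) / 2) = (√x ^ n)⁻¹ := by
  rw [neg_div, Real.rpow_neg hx, Real.sqrt_eq_rpow, ← Real.rpow_natCast, ← Real.rpow_mul hx]
  ring_nf

lemma ZMod.ringChar_ne_two_of_odd {p : ℕ} (hp : Odd p) : ringChar (ZMod p) ≠ 2 := by
  rw [ZMod.ringChar_zmod_n]
  rintro rfl
  exact Nat.not_odd_iff_even.mpr even_two hp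

open Filter Topology in
lemma tendsto_inv_sqrt_pow_atTop_nhds_zero {x : ℝ} (hx : 1 < x) :
    Tendsto (fun n : ℕ => (√x ^ n)⁻¹) atTop (𝓝 0) :=
  tendsto_inv_atTop_zero.comp
    (tendsto_pow_atTop_atTop_of_one_lt ((Real.lt_sqrt zero_le_one).mpr (by simpa using hx)))

/-- If the squares of the forms `L₁,…,L_m` are linearly dependent, with maximal
square-independent subsystem of size `ℓ < m`, then for the quadric
`A = {x ∈ 𝔽_p^n : xᵀx = 0}` the probability that every `Lᵢ(x)` lies in `A` is at least
`p^{-ℓ} − p^{-n/2}`; in particular, for large `n` it exceeds `α^m + ε` for some `ε > 0`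
depending only on `p`, `ℓ`, `m`, where `α` is the density of `A`. -/
theorem quadric_excess_square_dependent (p : ℕ) [Fact p.Prime] (hp : Odd p)
    (d m ℓ : ℕ) (hℓ : ℓ < m) (c : Fin m → Fin d → ZMod p)
    (S : Finset (Fin m)) (hS : S.card = ℓ)
    (hind : LinearIndependent (ZMod p)
      (fun i : S => fun rs : Fin d × Fin d => c i.1 rs.1 * c i.1 rs.2))
    (hmax : ∀ i : Fin m,
      (fun rs : Fin d × Fin d => c i rs.1 * c i rs.2) ∈
        Submodule.span (ZMod p)
          (Set.range (fun j : S => fun rs : Fin d × Fin d => c j.1 rs.1 * c j.1 rs.2)))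
    (P α : ℕ → ℝ)
    (hP : ∀ n, P n = ((Finset.univ.filter (fun x : Fin d → Fin n → ZMod p =>
        ∀ i : Fin m, ∑ j, (∑ u, c i u * x u j) ^ 2 = 0)).card : ℝ) /
        (Fintype.card (Fin d → Fin n → ZMod p) : ℝ))
    (hα : ∀ n, α n = ((Finset.univ.filter (fun y : Fin n → ZMod p =>
        ∑ j, y j ^ 2 = 0)).card : ℝ) / ((p : ℝ) ^ n)) :
    (∀ n, P n ≥ (p : ℝ) ^ (-(ℓ : ℝ)) - (p : ℝ) ^ (-(n : ℝ) / 2)) ∧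
      ∃ ε > (0 : ℝ), ∃ N : ℕ, ∀ n ≥ N, P n ≥ α n ^ m + ε := by
  have hψ := ZMod.isPrimitive_stdAddChar p
  have hF : ringChar (ZMod p) ≠ 2 := ZMod.ringChar_ne_two_of_odd hp
  have hp1 : (1 : ℝ) < p := by exact_mod_cast (Fact.out : p.Prime).one_lt
  -- currying turns the coefficient vectors on `Fin d × Fin d` into the matrices `cᵢ cᵢᵀ`
  let curry := LinearEquiv.curry (ZMod p) (ZMod p) (Fin d) (Fin d)
  have hΓ : LinearIndependent (ZMod p) fun k : S => vecMulVec (c k) (c k) :=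
    hind.map' curry.toLinearMap curry.ker
  have hspan (i : Fin m) :
      vecMulVec (c i) (c i) ∈
        Submodule.span (ZMod p) (Set.range fun k : S => vecMulVec (c k) (c k)) := by
    have h := Submodule.apply_mem_span_image_of_mem_span curry.toLinearMap (hmax i)
    rwa [← Set.range_comp] at h
  have hPn (n : ℕ) : |P n - ((p : ℝ) ^ ℓ)⁻¹| ≤ (√p ^ n)⁻¹ := by
    -- the statement decides `∀ i : Fin m` by `Nat.decidableForallFin`, not the generic instance
    rw [hP n, ← hS, ← Finset.filter_congr_decidable]
    simpa [ZMod.card] using abs_card_forall_sum_sq_eq_zero_div_sub_le _ hψ hF c S hΓ hspan n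
  have hαn (n : ℕ) : |α n - (p : ℝ)⁻¹| ≤ (√p ^ n)⁻¹ := by
    simpa [hα n, ZMod.card] using abs_card_sum_sq_eq_zero_div_sub_le _ hψ hF n
  refine ⟨fun n => ?_, ?_⟩
  · rw [Real.rpow_neg_natCast_div_two (by positivity), Real.rpow_neg (by positivity),
      Real.rpow_natCast]
    linarith [(abs_le.mp (hPn n)).1]
  · have hlt : (p : ℝ)⁻¹ ^ m < ((p : ℝ) ^ ℓ)⁻¹ := by
      rw [inv_pow, inv_lt_inv₀ (by positivity) (by positivity)]
      exact pow_lt_pow_right₀ hp1 hℓ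
    exact exists_pos_forall_ge_pow_add_le (tendsto_inv_sqrt_pow_atTop_nhds_zero hp1) hlt
      (fun n => by linarith [(abs_le.mp (hPn n)).1]) (fun n => by rw [hα n]; positivity)
      (fun n => by linarith [(abs_le.mp (hαn n)).2])
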